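/- Let p ∈ [1, ∞) and let μ, ν be Borel probability measures on ℝ with finite p-th moments, with CDFs F_μ(x) = μ((−∞, x]) and F_ν(x) = ν((−∞, x]) and quantile functions F_μ^{-1}(t) = inf{x : F_μ(x) ≥ t}, F_ν^{-1}(t) = inf{x : F_ν(x) ≥ t}. Then the p-Wasserstein distance has the closed form W_p(μ, ν)^p = ∫₀¹ |F_μ^{-1}(t) − F_ν^{-1}(t)|^p dt. -/

import Mathlib

/-!
The quantile coupling `(F_μ⁻¹, F_ν⁻¹)_# Leb(0,1)` has marginals `μ` and `ν` (inverse transform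
sampling) and cost `∫₀¹ |F_μ⁻¹ - F_ν⁻¹|^p`, which gives `≤`. For `≥`, write
`|x - y|^p = κ_p {(u, v) | min x y ≤ u, v < max x y}` for a single measure `κ_p` carried by
`{u ≤ v}`. By Tonelli the cost of a coupling `γ` becomes `∫ γ(C u v) dκ_p(u, v)`, where
`C u v` is the set of pairs whose segment covers `[u, v]`. It is the disjoint union of
`{x ≤ u, v < y}` and `{y ≤ u, v < x}`, so
`γ(C u v) ≥ (F_μ u - F_ν v)⁺ + (F_ν u - F_μ v)⁺`, with equality for the quantile coupling because
the level sets `{F_μ⁻¹ ≤ u}` and `{F_ν⁻¹ ≤ v}` are nested.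
-/


open MeasureTheory ENNReal

/-- The p-Wasserstein distance between Borel probability measures on ℝ,
defined as the infimum of transport cost over couplings. -/
noncomputable def Wp (p : ℝ) (μ ν : Measure ℝ) : ℝ≥0∞ :=
  ⨅ γ ∈ {γ : Measure (ℝ × ℝ) | γ.map Prod.fst = μ ∧ γ.map Prod.snd = ν},
    (∫⁻ q, ENNReal.ofReal (|q.1 - q.2| ^ p) ∂γ) ^ (1 / p)

/-- The cumulative distribution function of a measure on ℝ: F(x) = μ((−∞, x]). -/
noncomputable def mCDF (μ : Measure ℝ) (x : ℝ) : ℝ := (μ (Set.Iic x)).toReal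

/-- The quantile function of a measure on ℝ: F⁻¹(t) = inf {x : F(x) ≥ t}. -/
noncomputable def mQuantile (μ : Measure ℝ) (t : ℝ) : ℝ :=
  sInf {x : ℝ | t ≤ mCDF μ x}

/-- A measure on ℝ has finite p-th moment. -/
def FiniteMoment1 (p : ℝ) (μ : Measure ℝ) : Prop :=
  ∫⁻ x, ENNReal.ofReal (|x| ^ p) ∂μ < ⊤

open Set Filter Topology ProbabilityTheory

section Quantile

variable {m : Measure ℝ} [IsProbabilityMeasure m]

lemma mCDF_eq_cdf (m : Measure ℝ) [IsProbabilityMeasure m] : mCDF m = cdf m :=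
  funext fun x => (cdf_eq_real m x).symm

lemma ofReal_mCDF (x : ℝ) : ENNReal.ofReal (mCDF m x) = m (Iic x) := by
  rw [mCDF_eq_cdf, ofReal_cdf]

lemma bddBelow_setOf_le_mCDF {t : ℝ} (ht : 0 < t) : BddBelow {x | t ≤ mCDF m x} := by
  obtain ⟨x₀, hx₀⟩ :=
    eventually_atBot.1 ((tendsto_cdf_atBot m).eventually (eventually_lt_nhds ht))
  refine ⟨x₀, fun y (hy : t ≤ mCDF m y) => le_of_not_gt fun hy₀ => ?_⟩
  rw [mCDF_eq_cdf] at hy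
  exact (hx₀ y hy₀.le).not_ge hy

lemma nonempty_setOf_le_mCDF {t : ℝ} (ht : t < 1) : {x | t ≤ mCDF m x}.Nonempty := by
  obtain ⟨x, hx⟩ := ((tendsto_cdf_atTop m).eventually (eventually_gt_nhds ht)).exists
  exact ⟨x, show t ≤ mCDF m x by rw [mCDF_eq_cdf]; exact hx.le⟩

/-- Right-continuity of the CDF makes the infimum defining the quantile a minimum. -/
lemma le_mCDF_mQuantile {t : ℝ} (ht : t ∈ Ioo 0 1) : t ≤ mCDF m (mQuantile m t) := by
  have h_above : ∀ x ∈ Ioi (mQuantile m t), t ≤ cdf m x := fun x hx => by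
    obtain ⟨s, hs : t ≤ mCDF m s, hsx⟩ :=
      (csInf_lt_iff (bddBelow_setOf_le_mCDF ht.1) (nonempty_setOf_le_mCDF ht.2)).1 hx
    rw [mCDF_eq_cdf] at hs
    exact hs.trans (monotone_cdf m hsx.le)
  rw [mCDF_eq_cdf]
  exact ge_of_tendsto ((cdf m).right_continuous _ |>.tendsto.mono_left
    (nhdsWithin_mono _ Ioi_subset_Ici_self)) (eventually_nhdsWithin_of_forall h_above)

lemma mQuantile_le_iff {t : ℝ} (ht : t ∈ Ioo 0 1) {x : ℝ} :
    mQuantile m t ≤ x ↔ t ≤ mCDF m x :=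
  ⟨fun h => (le_mCDF_mQuantile ht).trans (by rw [mCDF_eq_cdf]; exact monotone_cdf m h),
    fun h => csInf_le (bddBelow_setOf_le_mCDF ht.1) h⟩

lemma monotoneOn_mQuantile : MonotoneOn (mQuantile m) (Ioo 0 1) := fun _ ha _ hb hab =>
  csInf_le_csInf (bddBelow_setOf_le_mCDF ha.1) (nonempty_setOf_le_mCDF hb.2)
    fun _ hx => hab.trans hx

lemma aemeasurable_mQuantile : AEMeasurable (mQuantile m) (volume.restrict (Ioo 0 1)) :=
  aemeasurable_restrict_of_monotoneOn measurableSet_Ioo monotoneOn_mQuantile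

lemma setOf_mQuantile_le_ae_eq (x : ℝ) :
    {t | mQuantile m t ≤ x} =ᵐ[volume.restrict (Ioo 0 1)] Iic (mCDF m x) := by
  filter_upwards [ae_restrict_mem measurableSet_Ioo] with t ht
  exact propext (mQuantile_le_iff ht)

lemma restrict_Ioo_zero_one_Iic {c : ℝ} (hc : c ≤ 1) :
    volume.restrict (Ioo (0 : ℝ) 1) (Iic c) = ENNReal.ofReal c := by
  rw [Measure.restrict_congr_set Ioo_ae_eq_Ioc, Measure.restrict_apply measurableSet_Iic,
    Iic_inter_Ioc_of_le hc, Real.volume_Ioc, sub_zero]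

lemma restrict_Ioo_zero_one_setOf_mQuantile_le (x : ℝ) :
    volume.restrict (Ioo (0 : ℝ) 1) {t | mQuantile m t ≤ x} = m (Iic x) := by
  rw [measure_congr (setOf_mQuantile_le_ae_eq x),
    restrict_Ioo_zero_one_Iic (mCDF_eq_cdf m ▸ cdf_le_one m x), ofReal_mCDF]

lemma map_mQuantile (m : Measure ℝ) [IsProbabilityMeasure m] :
    (volume.restrict (Ioo (0 : ℝ) 1)).map (mQuantile m) = m :=
  Measure.ext_of_Iic _ _ fun x => by
    rw [Measure.map_apply_of_aemeasurable aemeasurable_mQuantile measurableSet_Iic]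
    exact restrict_Ioo_zero_one_setOf_mQuantile_le x

end Quantile

section Coupling

lemma measure_Iic_sdiff_Iic {α : Type*} [LinearOrder α] [TopologicalSpace α]
    [OrderClosedTopology α] [MeasurableSpace α] [OpensMeasurableSpace α]
    (ρ : Measure α) [IsFiniteMeasure ρ] (a b : α) :
    ρ (Iic a \ Iic b) = ρ (Iic a) - ρ (Iic b) := by
  rcases le_total a b with h | h
  · rw [sdiff_eq_empty.2 (Iic_subset_Iic.2 h), measure_empty,
      tsub_eq_zero_of_le (measure_mono (Iic_subset_Iic.2 h))]
  · exact measure_sdiff (Iic_subset_Iic.2 h) measurableSet_Iic.nullMeasurableSet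
      (measure_ne_top _ _)

lemma restrict_Ioo_zero_one_setOf_mQuantile_le_sdiff (μ ν : Measure ℝ)
    [IsProbabilityMeasure μ] [IsProbabilityMeasure ν] (u v : ℝ) :
    volume.restrict (Ioo (0 : ℝ) 1) ({t | mQuantile μ t ≤ u} \ {t | mQuantile ν t ≤ v})
      = μ (Iic u) - ν (Iic v) := by
  rw [measure_congr ((setOf_mQuantile_le_ae_eq u).diff (setOf_mQuantile_le_ae_eq v)),
    measure_Iic_sdiff_Iic, ← measure_congr (setOf_mQuantile_le_ae_eq u),
    ← measure_congr (setOf_mQuantile_le_ae_eq v), restrict_Ioo_zero_one_setOf_mQuantile_le,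
    restrict_Ioo_zero_one_setOf_mQuantile_le]

def crossingSet (u v : ℝ) : Set (ℝ × ℝ) := {q | min q.1 q.2 ≤ u ∧ v < max q.1 q.2}

lemma crossingSet_eq_union {u v : ℝ} (huv : u ≤ v) :
    crossingSet u v = (Prod.fst ⁻¹' Iic u \ Prod.snd ⁻¹' Iic v)
      ∪ (Prod.snd ⁻¹' Iic u \ Prod.fst ⁻¹' Iic v) := by
  ext ⟨x, y⟩
  simp only [crossingSet, mem_ofPred_eq, mem_union, Set.mem_sdiff, mem_preimage, mem_Iic,
    min_le_iff, lt_max_iff, not_le]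
  constructor
  · rintro ⟨hx | hy, hvx | hvy⟩ <;> first | (exfalso; linarith) | tauto
  · rintro (⟨hx, hvy⟩ | ⟨hy, hvx⟩) <;> tauto

lemma measure_crossingSet (γ : Measure (ℝ × ℝ)) {u v : ℝ} (huv : u ≤ v) :
    γ (crossingSet u v) = γ (Prod.fst ⁻¹' Iic u \ Prod.snd ⁻¹' Iic v)
      + γ (Prod.snd ⁻¹' Iic u \ Prod.fst ⁻¹' Iic v) := by
  rw [crossingSet_eq_union huv]
  exact measure_union (disjoint_left.2 fun _ h₁ h₂ => h₂.2 (le_trans h₁.1 huv))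
    ((measurable_snd measurableSet_Iic).diff (measurable_fst measurableSet_Iic))

lemma le_measure_crossingSet {μ ν : Measure ℝ} {γ : Measure (ℝ × ℝ)}
    (hγ₁ : γ.map Prod.fst = μ) (hγ₂ : γ.map Prod.snd = ν) {u v : ℝ} (huv : u ≤ v) :
    (μ (Iic u) - ν (Iic v)) + (ν (Iic u) - μ (Iic v)) ≤ γ (crossingSet u v) := by
  have h₁ (x : ℝ) : γ (Prod.fst ⁻¹' Iic x) = μ (Iic x) := by
    rw [← hγ₁, Measure.map_apply measurable_fst measurableSet_Iic]
  have h₂ (x : ℝ) : γ (Prod.snd ⁻¹' Iic x) = ν (Iic x) := by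
    rw [← hγ₂, Measure.map_apply measurable_snd measurableSet_Iic]
  rw [measure_crossingSet γ huv, ← h₁ u, ← h₁ v, ← h₂ u, ← h₂ v]
  exact add_le_add le_measure_sdiff le_measure_sdiff

noncomputable def quantileCoupling (μ ν : Measure ℝ) : Measure (ℝ × ℝ) :=
  (volume.restrict (Ioo (0 : ℝ) 1)).map fun t => (mQuantile μ t, mQuantile ν t)

instance (μ ν : Measure ℝ) : IsFiniteMeasure (quantileCoupling μ ν) :=
  Measure.isFiniteMeasure_map _ _

variable {μ ν : Measure ℝ} [IsProbabilityMeasure μ] [IsProbabilityMeasure ν]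

lemma aemeasurable_mQuantile_prodMk :
    AEMeasurable (fun t => (mQuantile μ t, mQuantile ν t)) (volume.restrict (Ioo 0 1)) :=
  aemeasurable_mQuantile.prodMk aemeasurable_mQuantile

lemma quantileCoupling_map_fst : (quantileCoupling μ ν).map Prod.fst = μ := by
  rw [quantileCoupling, AEMeasurable.map_map_of_aemeasurable measurable_fst.aemeasurable
    aemeasurable_mQuantile_prodMk]
  exact map_mQuantile μ

lemma quantileCoupling_map_snd : (quantileCoupling μ ν).map Prod.snd = ν := by
  rw [quantileCoupling, AEMeasurable.map_map_of_aemeasurable measurable_snd.aemeasurable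
    aemeasurable_mQuantile_prodMk]
  exact map_mQuantile ν

lemma lintegral_quantileCoupling {f : ℝ × ℝ → ℝ≥0∞} (hf : Measurable f) :
    ∫⁻ q, f q ∂quantileCoupling μ ν = ∫⁻ t in Ioo 0 1, f (mQuantile μ t, mQuantile ν t) :=
  lintegral_map' hf.aemeasurable aemeasurable_mQuantile_prodMk

lemma quantileCoupling_crossingSet {u v : ℝ} (huv : u ≤ v) :
    quantileCoupling μ ν (crossingSet u v)
      = (μ (Iic u) - ν (Iic v)) + (ν (Iic u) - μ (Iic v)) := by
  rw [measure_crossingSet _ huv, quantileCoupling,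
    Measure.map_apply_of_aemeasurable aemeasurable_mQuantile_prodMk
      ((measurable_fst measurableSet_Iic).diff (measurable_snd measurableSet_Iic)),
    Measure.map_apply_of_aemeasurable aemeasurable_mQuantile_prodMk
      ((measurable_snd measurableSet_Iic).diff (measurable_fst measurableSet_Iic))]
  exact congrArg₂ (· + ·) (restrict_Ioo_zero_one_setOf_mQuantile_le_sdiff μ ν u v)
    (restrict_Ioo_zero_one_setOf_mQuantile_le_sdiff ν μ u v)

end Coupling

lemma lintegral_Ioo_ofReal_deriv {g g' : ℝ → ℝ} {a b : ℝ} (hab : a ≤ b)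
    (hcont : ContinuousOn g (Icc a b)) (hderiv : ∀ x ∈ Ioo a b, HasDerivAt g (g' x) x)
    (hpos : ∀ x ∈ Ioo a b, 0 ≤ g' x) :
    ∫⁻ x in Ioo a b, ENNReal.ofReal (g' x) = ENNReal.ofReal (g b - g a) := by
  have hint := intervalIntegral.integrableOn_deriv_of_nonneg hcont hderiv hpos
  rw [← ofReal_integral_eq_lintegral_ofReal (hint.mono_set Ioo_subset_Ioc_self)
      ((ae_restrict_mem measurableSet_Ioo).mono hpos),
    ← integral_Ioc_eq_integral_Ioo, ← intervalIntegral.integral_of_le hab,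
    intervalIntegral.integral_eq_sub_of_hasDerivAt_of_le hab hcont hderiv
      ((intervalIntegrable_iff_integrableOn_Ioc_of_le hab).2 hint)]

lemma lintegral_Ioo_rpow_sub_left {r a b : ℝ} (hr : 0 < r) (hab : a ≤ b) :
    ∫⁻ x in Ioo a b, ENNReal.ofReal (r * (x - a) ^ (r - 1)) = ENNReal.ofReal ((b - a) ^ r) := by
  have hcont : ContinuousOn (fun x => (x - a) ^ r) (Icc a b) :=
    ((continuous_id.sub continuous_const).rpow_const fun _ => Or.inr hr.le).continuousOn
  have hderiv (x : ℝ) (hx : x ∈ Ioo a b) :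
      HasDerivAt (fun x => (x - a) ^ r) (r * (x - a) ^ (r - 1)) x := by
    simpa using ((hasDerivAt_id x).sub_const a).rpow_const (Or.inl (sub_pos.2 hx.1).ne')
  rw [lintegral_Ioo_ofReal_deriv hab hcont hderiv
    fun x hx => mul_nonneg hr.le (Real.rpow_nonneg (sub_pos.2 hx.1).le _),
    sub_self, Real.zero_rpow hr.ne', sub_zero]

lemma lintegral_Ioo_rpow_sub_right {r a b : ℝ} (hr : 0 < r) (hab : a ≤ b) :
    ∫⁻ x in Ioo a b, ENNReal.ofReal (r * (b - x) ^ (r - 1)) = ENNReal.ofReal ((b - a) ^ r) := by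
  have hcont : ContinuousOn (fun x => -(b - x) ^ r) (Icc a b) :=
    ((continuous_const.sub continuous_id).rpow_const fun _ => Or.inr hr.le).neg.continuousOn
  have hderiv (x : ℝ) (hx : x ∈ Ioo a b) :
      HasDerivAt (fun x => -(b - x) ^ r) (r * (b - x) ^ (r - 1)) x :=
    (((hasDerivAt_id x).const_sub b).rpow_const (p := r)
      (Or.inl (sub_pos.2 hx.2).ne')).fun_neg.congr_deriv (by simp)
  rw [lintegral_Ioo_ofReal_deriv hab hcont hderiv
    fun x hx => mul_nonneg hr.le (Real.rpow_nonneg (sub_pos.2 hx.2).le _),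
    sub_self, Real.zero_rpow hr.ne', neg_zero, zero_sub, neg_neg]

noncomputable def layerDensity (p : ℝ) : ℝ × ℝ → ℝ≥0∞ :=
  {z | z.1 < z.2}.indicator fun z => ENNReal.ofReal (p * (p - 1) * (z.2 - z.1) ^ (p - 2))

/-- Built so that `layerMeasure p (Ici a ×ˢ Iio b) = (b - a) ^ p`: for `p > 1` its density is
`-∂ᵤ∂ᵥ (v - u) ^ p`; for `p = 1` the mass sits on the diagonal. -/
noncomputable def layerMeasure (p : ℝ) : Measure (ℝ × ℝ) :=
  if p = 1 then volume.map fun u => (u, u) else volume.withDensity (layerDensity p)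

instance (p : ℝ) : SFinite (layerMeasure p) := by
  unfold layerMeasure; split_ifs <;> infer_instance

lemma measurable_layerDensity (p : ℝ) : Measurable (layerDensity p) :=
  Measurable.indicator (by fun_prop) (measurableSet_lt measurable_fst measurable_snd)

lemma ae_fst_le_snd_layerMeasure (p : ℝ) : ∀ᵐ z ∂layerMeasure p, z.1 ≤ z.2 := by
  unfold layerMeasure
  split_ifs
  · exact (ae_map_iff (by fun_prop) (measurableSet_le measurable_fst measurable_snd)).2
      (Eventually.of_forall fun _ => le_rfl)
  · exact (ae_withDensity_iff (measurable_layerDensity p)).2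
      (Eventually.of_forall fun _ hz => (mem_of_indicator_ne_zero hz).le)

lemma lintegral_Iio_layerDensity {p : ℝ} (hp : 1 < p) (u b : ℝ) :
    ∫⁻ v in Iio b, layerDensity p (u, v)
      = (Iio b).indicator (fun u => ENNReal.ofReal (p * (b - u) ^ (p - 1))) u := by
  change ∫⁻ v in Iio b, (Ioi u).indicator
    (fun v => ENNReal.ofReal (p * (p - 1) * (v - u) ^ (p - 2))) v = _
  rw [setLIntegral_indicator measurableSet_Ioi, Ioi_inter_Iio]
  by_cases hu : u < b
  · have hexp : p - 2 = (p - 1) - 1 := by ring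
    simp_rw [indicator_of_mem (mem_Iio.2 hu), hexp, mul_assoc,
      ENNReal.ofReal_mul (zero_le_one.trans hp.le)]
    rw [lintegral_const_mul' _ _ ENNReal.ofReal_ne_top,
      lintegral_Ioo_rpow_sub_left (sub_pos.2 hp) hu.le]
  · rw [indicator_of_notMem (mt mem_Iio.1 hu), Ioo_eq_empty hu, Measure.restrict_empty,
      lintegral_zero_measure]

lemma layerMeasure_Ici_prod_Iio {p : ℝ} (hp : 1 ≤ p) {a b : ℝ} (hab : a ≤ b) :
    layerMeasure p (Ici a ×ˢ Iio b) = ENNReal.ofReal ((b - a) ^ p) := by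
  have hS : MeasurableSet (Ici a ×ˢ Iio b) := measurableSet_Ici.prod measurableSet_Iio
  unfold layerMeasure
  split_ifs with h
  · rw [Measure.map_apply (by fun_prop) hS, h, Real.rpow_one]
    exact Real.volume_Ico
  have hp₁ : 1 < p := lt_of_le_of_ne hp (Ne.symm h)
  rw [withDensity_apply _ hS, Measure.volume_eq_prod,
    setLIntegral_prod _ (measurable_layerDensity p).aemeasurable]
  simp_rw [lintegral_Iio_layerDensity hp₁]
  rw [setLIntegral_indicator measurableSet_Iio, Iio_inter_Ici,
    setLIntegral_congr Ioo_ae_eq_Ico.symm, lintegral_Ioo_rpow_sub_right (by linarith) hab]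

lemma layerMeasure_Ici_min_prod_Iio_max {p : ℝ} (hp : 1 ≤ p) (x y : ℝ) :
    layerMeasure p (Ici (min x y) ×ˢ Iio (max x y)) = ENNReal.ofReal (|x - y| ^ p) := by
  rw [layerMeasure_Ici_prod_Iio hp min_le_max, max_sub_min_eq_abs']

lemma lintegral_rpow_abs_sub_eq_lintegral_crossingSet {p : ℝ} (hp : 1 ≤ p)
    (γ : Measure (ℝ × ℝ)) [SFinite γ] :
    ∫⁻ q, ENNReal.ofReal (|q.1 - q.2| ^ p) ∂γ = ∫⁻ z, γ (crossingSet z.1 z.2) ∂layerMeasure p := by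
  let U : Set ((ℝ × ℝ) × (ℝ × ℝ)) := {w | w.1 ∈ crossingSet w.2.1 w.2.2}
  have hU : MeasurableSet U :=
    (measurableSet_le (measurable_fst.fst.min measurable_fst.snd) measurable_snd.fst).inter
      (measurableSet_lt measurable_snd.snd (measurable_fst.fst.max measurable_fst.snd))
  calc ∫⁻ q, ENNReal.ofReal (|q.1 - q.2| ^ p) ∂γ
      = ∫⁻ q, layerMeasure p (Prod.mk q ⁻¹' U) ∂γ :=
        lintegral_congr fun q => (layerMeasure_Ici_min_prod_Iio_max hp q.1 q.2).symm
    _ = γ.prod (layerMeasure p) U := (Measure.prod_apply hU).symm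
    _ = ∫⁻ z, γ (crossingSet z.1 z.2) ∂layerMeasure p := Measure.prod_apply_symm hU

lemma lintegral_quantileCoupling_le {p : ℝ} (hp : 1 ≤ p) {μ ν : Measure ℝ}
    [IsProbabilityMeasure μ] [IsProbabilityMeasure ν] {γ : Measure (ℝ × ℝ)}
    (hγ₁ : γ.map Prod.fst = μ) (hγ₂ : γ.map Prod.snd = ν) :
    ∫⁻ q, ENNReal.ofReal (|q.1 - q.2| ^ p) ∂quantileCoupling μ ν
      ≤ ∫⁻ q, ENNReal.ofReal (|q.1 - q.2| ^ p) ∂γ := by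
  have : IsProbabilityMeasure (γ.map Prod.fst) := hγ₁ ▸ inferInstance
  have := Measure.isProbabilityMeasure_of_map (μ := γ) Prod.fst
  rw [lintegral_rpow_abs_sub_eq_lintegral_crossingSet hp,
    lintegral_rpow_abs_sub_eq_lintegral_crossingSet hp]
  refine lintegral_mono_ae ?_
  filter_upwards [ae_fst_le_snd_layerMeasure p] with z hz
  rw [quantileCoupling_crossingSet hz]
  exact le_measure_crossingSet hγ₁ hγ₂ hz

theorem wasserstein_quantile_formula_general (p : ℝ) (hp : 1 ≤ p) (μ ν : Measure ℝ)
    [IsProbabilityMeasure μ] [IsProbabilityMeasure ν] :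
    (Wp p μ ν) ^ p
      = ∫⁻ t in Set.Ioo (0 : ℝ) 1,
          ENNReal.ofReal (|mQuantile μ t - mQuantile ν t| ^ p) := by
  have hp₀ : 0 < p := zero_lt_one.trans_le hp
  have hcost : ∫⁻ q, ENNReal.ofReal (|q.1 - q.2| ^ p) ∂quantileCoupling μ ν
      = ∫⁻ t in Ioo 0 1, ENNReal.ofReal (|mQuantile μ t - mQuantile ν t| ^ p) :=
    lintegral_quantileCoupling (by fun_prop)
  rw [← hcost]
  suffices Wp p μ ν = (∫⁻ q, ENNReal.ofReal (|q.1 - q.2| ^ p) ∂quantileCoupling μ ν) ^ (1 / p) by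
    rw [this, ← ENNReal.rpow_mul, one_div_mul_cancel hp₀.ne', ENNReal.rpow_one]
  refine le_antisymm (iInf₂_le _ ⟨quantileCoupling_map_fst, quantileCoupling_map_snd⟩) ?_
  exact le_iInf₂ fun γ hγ =>
    ENNReal.rpow_le_rpow (lintegral_quantileCoupling_le hp hγ.1 hγ.2) (by positivity)

/-- Closed form of the 1D p-Wasserstein distance via quantile
functions: W_p(μ, ν)^p = ∫₀¹ |F_μ⁻¹(t) − F_ν⁻¹(t)|^p dt. -/
theorem wasserstein_quantile_formula (p : ℝ) (hp : 1 ≤ p) (μ ν : Measure ℝ)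
    [IsProbabilityMeasure μ] [IsProbabilityMeasure ν]
    (hμ : FiniteMoment1 p μ) (hν : FiniteMoment1 p ν) :
    (Wp p μ ν) ^ p
      = ∫⁻ t in Set.Ioo (0 : ℝ) 1,
          ENNReal.ofReal (|mQuantile μ t - mQuantile ν t| ^ p) :=
  wasserstein_quantile_formula_general p hp μ ν
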